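/- arXiv:2511.01452 — 4 statements merged into one kernel-verified Lean document; each statement's English description precedes it below -/
import Mathlib

section
/- Assume that for every class c ∈ C and every policy u ∈ U^c, η^{c,u} is the unique stationary distribution of φ^{c,u}, and that for every class c ∈ C the revision protocol ρ^c is excess payoff or pairwise comparison. If μ ∈ X is a rest point of the mean dynamic, i.e. f^{c,d}_{s,u}(μ) + f^{c,r}_{s,u}(μ) = 0 for every c ∈ C, s ∈ S^c, u ∈ U^c, then μ is a mixed stationary Nash equilibrium (MSNE). -/
open Finset

variable {C : Type*} {S U : C → Type*}

/-- Membership in the state-policy distribution space `X`. -/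
def MemX [∀ c, Fintype (S c)] [∀ c, Fintype (U c)]
    (m : C → ℝ) (μ : (c : C) → S c → U c → ℝ) : Prop :=
  ∀ c, (∀ s u, 0 ≤ μ c s u) ∧ (∑ s, ∑ u, μ c s u) = m c

/-- Mixed stationary Nash equilibrium: every policy with positive mass is payoff maximizing,
and the state distribution of each policy is the stationary one. -/
def IsMSNE [∀ c, Fintype (S c)]
    (F : (c : C) → ((c' : C) → S c' → U c' → ℝ) → U c → ℝ)
    (η : (c : C) → U c → S c → ℝ)
    (μ : (c : C) → S c → U c → ℝ) : Prop :=
  ∀ (c : C) (u : U c),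
    ((0 < ∑ s, μ c s u) → ∀ v, F c μ v ≤ F c μ u) ∧
    (∀ s, μ c s u = η c u s * ∑ s', μ c s' u)

/-- The simplex `Δ` of policy-mass vectors of total mass `mc`. -/
def simplexSet {V : Type*} [Fintype V] (mc : ℝ) : Set (V → ℝ) :=
  {σ | (∀ v, 0 ≤ σ v) ∧ (∑ v, σ v) = mc}

/-- The dynamic (state-transition) flow `f^{c,d}_{s,u}(μ)`. -/
def fdFlow [∀ c, Fintype (S c)]
    (lam : C → ℝ) (φ : (c : C) → U c → Matrix (S c) (S c) ℝ)
    (μ : (c : C) → S c → U c → ℝ) (c : C) (s : S c) (u : U c) : ℝ :=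
  lam c * ((∑ s', φ c u s s' * μ c s' u) - μ c s u)

/-- The revision flow `f^{c,r}_{s,u}(μ)`. -/
def frFlow [∀ c, Fintype (S c)] [∀ c, Fintype (U c)]
    (F : (c : C) → ((c' : C) → S c' → U c' → ℝ) → U c → ℝ)
    (ρ : (c : C) → (U c → ℝ) → (U c → ℝ) → U c → U c → ℝ)
    (μ : (c : C) → S c → U c → ℝ) (c : C) (s : S c) (u : U c) : ℝ :=
  (∑ u', μ c s u' * ρ c (F c μ) (fun v => ∑ s', μ c s' v) u' u)
    - μ c s u * ∑ u', ρ c (F c μ) (fun v => ∑ s', μ c s' v) u u'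

/-- Imitative revision protocol. -/
def IsImitative {V : Type*} [Fintype V] (mc : ℝ)
    (ρ : (V → ℝ) → (V → ℝ) → V → V → ℝ) : Prop :=
  ∃ r : (V → ℝ) → (V → ℝ) → V → V → ℝ,
    (∃ K, LipschitzOnWith K (fun p : (V → ℝ) × (V → ℝ) => r p.1 p.2)
        (Set.univ ×ˢ simplexSet mc)) ∧
    (∀ F σ, σ ∈ simplexSet (V := V) mc → ∀ u v, 0 ≤ r F σ u v) ∧
    (∀ F σ, σ ∈ simplexSet (V := V) mc → ∀ u v k : V,
        (F u ≤ F v ↔ r F σ k u - r F σ u k ≤ r F σ k v - r F σ v k)) ∧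
    (∀ F σ, σ ∈ simplexSet (V := V) mc → ∀ u v, ρ F σ u v = r F σ u v * σ v / mc)

/-- Imitative-via-comparison revision protocol: imitative with sign-preserving
conditional imitation rates. -/
def IsImitativeViaComparison {V : Type*} [Fintype V] (mc : ℝ)
    (ρ : (V → ℝ) → (V → ℝ) → V → V → ℝ) : Prop :=
  ∃ r : (V → ℝ) → (V → ℝ) → V → V → ℝ,
    (∃ K, LipschitzOnWith K (fun p : (V → ℝ) × (V → ℝ) => r p.1 p.2)
        (Set.univ ×ˢ simplexSet mc)) ∧
    (∀ F σ, σ ∈ simplexSet (V := V) mc → ∀ u v, 0 ≤ r F σ u v) ∧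
    (∀ F σ, σ ∈ simplexSet (V := V) mc → ∀ u v k : V,
        (F u ≤ F v ↔ r F σ k u - r F σ u k ≤ r F σ k v - r F σ v k)) ∧
    (∀ F σ, σ ∈ simplexSet (V := V) mc → ∀ u v,
        Real.sign (r F σ u v) = Real.sign (max 0 (F v - F u))) ∧
    (∀ F σ, σ ∈ simplexSet (V := V) mc → ∀ u v, ρ F σ u v = r F σ u v * σ v / mc)

/-- Excess payoff revision protocol. -/
def IsExcessPayoff {V : Type*} [Fintype V] (mc : ℝ)
    (ρ : (V → ℝ) → (V → ℝ) → V → V → ℝ) : Prop :=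
  ∃ τ : (V → ℝ) → V → ℝ,
    (∃ K, LipschitzWith K τ) ∧
    (∀ F v, 0 ≤ τ F v) ∧
    (∀ Fhat : V → ℝ, (∃ v, 0 < Fhat v) → 0 < ∑ v, τ Fhat v * Fhat v) ∧
    (∀ F σ, σ ∈ simplexSet (V := V) mc → ∀ u v,
        ρ F σ u v = τ (fun w => F w - (∑ w', F w' * σ w') / mc) v)

/-- Pairwise comparison revision protocol. -/
def IsPairwiseComparison {V : Type*} [Fintype V] (mc : ℝ)
    (ρ : (V → ℝ) → (V → ℝ) → V → V → ℝ) : Prop :=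
  ∃ τ : (V → ℝ) → V → V → ℝ,
    (∃ K, LipschitzWith K τ) ∧
    (∀ F u v, 0 ≤ τ F u v) ∧
    (∀ F (u v : V), Real.sign (τ F u v) = Real.sign (max 0 (F v - F u))) ∧
    (∀ F σ, σ ∈ simplexSet (V := V) mc → ∀ u v, ρ F σ u v = τ F u v)

private lemma sign_zero_of {x y : ℝ} (hx : 0 ≤ x) (hy : y ≤ 0)
    (h : Real.sign x = Real.sign (max 0 y)) : x = 0 := by
  rw [max_eq_left hy, Real.sign_zero] at h
  rcases hx.eq_or_lt with h0 | h0
  · exact h0.symm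
  · rw [Real.sign_of_pos h0] at h; norm_num at h

private lemma sign_pos_of {x y : ℝ} (hy : 0 < y)
    (h : Real.sign x = Real.sign (max 0 y)) : 0 < x := by
  rw [max_eq_right hy.le, Real.sign_of_pos hy] at h
  rcases lt_trichotomy x 0 with h0|h0|h0
  · rw [Real.sign_of_neg h0] at h; norm_num at h
  · rw [h0, Real.sign_zero] at h; norm_num at h
  · exact h0

lemma acute_aux {V : Type*} [Fintype V]
    (τ : (V → ℝ) → V → ℝ) (hτc : Continuous τ)
    (hτ0 : ∀ F v, 0 ≤ τ F v)
    (hac : ∀ Fh : V → ℝ, (∃ v, 0 < Fh v) → 0 < ∑ v, τ Fh v * Fh v)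
    (Fh : V → ℝ) (hFh : ∀ v, Fh v ≤ 0) (w : V) (hFw : Fh w = 0) :
    ∀ v, v ≠ w → Fh v = 0 → τ Fh v = 0 := by
  classical
  set Zs : Finset V := (Finset.univ.erase w).filter (fun v => Fh v = 0) with hZs
  set Ssum : ℝ := ∑ v ∈ Zs, τ Fh v with hSsum
  have hS0 : 0 ≤ Ssum := Finset.sum_nonneg fun v _ => hτ0 _ v
  have hSle : Ssum = 0 := by
    rcases hS0.eq_or_lt with h | hS
    · exact h.symm
    · exfalso
      set K : ℝ := (τ Fh w + 1) / Ssum with hK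
      set d : V → ℝ := fun v => if v = w then 1 else if v ∈ Zs then -K else 0 with hd
      set G : ℝ → V → ℝ := fun t v => Fh v + t * d v with hG
      have hG0 : G 0 = Fh := by funext v; simp [hG]
      set h : ℝ → ℝ := fun t => τ (G t) w - K * ∑ v ∈ Zs, τ (G t) v with hh
      have hGc : Continuous G := by
        apply continuous_pi; intro v
        exact continuous_const.add (continuous_id.mul continuous_const)
      have hhc : Continuous h := by
        apply Continuous.sub
        · exact (continuous_apply w).comp (hτc.comp hGc)
        · exact continuous_const.mul (by
            apply continuous_finset_sum
            intro v _
            exact (continuous_apply v).comp (hτc.comp hGc))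
      have hh0 : h 0 = -1 := by
        simp only [hh, hG0, ← hSsum]
        rw [hK, div_mul_cancel₀ _ (ne_of_gt hS)]
        ring
      have hpos : ∀ t : ℝ, 0 < t → 0 < h t := by
        intro t ht
        have hGtw : G t w = t := by simp [hG, hd, hFw]
        have hac' : 0 < ∑ v, τ (G t) v * G t v := hac _ ⟨w, by rw [hGtw]; exact ht⟩
        have hsplit : ∑ v, τ (G t) v * G t v ≤ t * h t := by
          rw [← Finset.add_sum_erase _ _ (Finset.mem_univ w)]
          have h1 : ∑ v ∈ Finset.univ.erase w, τ (G t) v * G t v ≤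
              ∑ v ∈ Zs, τ (G t) v * (-(K * t)) := by
            rw [hZs, ← Finset.sum_filter_add_sum_filter_not (Finset.univ.erase w)
              (fun v => Fh v = 0) (fun v => τ (G t) v * G t v)]
            have e1 : ∀ v ∈ (Finset.univ.erase w).filter (fun v => Fh v = 0),
                τ (G t) v * G t v = τ (G t) v * (-(K * t)) := by
              intro v hv
              simp only [Finset.mem_filter, Finset.mem_erase] at hv
              have : G t v = -(K * t) := by
                simp [hG, hd, hv.1.1, hv.2, hZs, Finset.mem_filter, hv.1.1]
                ring
              rw [this]
            rw [Finset.sum_congr rfl e1]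
            have e2 : ∑ v ∈ (Finset.univ.erase w).filter (fun v => ¬ Fh v = 0),
                τ (G t) v * G t v ≤ 0 := by
              apply Finset.sum_nonpos
              intro v hv
              simp only [Finset.mem_filter, Finset.mem_erase] at hv
              have : G t v = Fh v := by
                simp [hG, hd, hv.1.1, hZs, Finset.mem_filter, hv.2]
              rw [this]
              exact mul_nonpos_of_nonneg_of_nonpos (hτ0 _ v) (hFh v)
            linarith
          have h2 : ∑ v ∈ Zs, τ (G t) v * (-(K * t)) = -(K * t) * ∑ v ∈ Zs, τ (G t) v := by
            rw [Finset.mul_sum]; exact Finset.sum_congr rfl fun v _ => by ring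
          rw [hGtw]
          have : t * h t = τ (G t) w * t + (-(K*t) * ∑ v ∈ Zs, τ (G t) v) := by
            simp only [hh]; ring
          rw [this]
          linarith [h1, h2.le, h2.ge]
        have := lt_of_lt_of_le hac' hsplit
        by_contra hcon
        push_neg at hcon
        nlinarith
      -- continuity contradiction
      have htend : Filter.Tendsto h (nhdsWithin 0 (Set.Ioi 0)) (nhds (-1)) := by
        rw [← hh0]
        exact (hhc.tendsto 0).mono_left nhdsWithin_le_nhds
      have hev : ∀ᶠ t in nhdsWithin (0:ℝ) (Set.Ioi 0), h t < 0 :=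
        htend.eventually_lt_const (by norm_num)
      have hev2 : ∀ᶠ t in nhdsWithin (0:ℝ) (Set.Ioi 0), t ∈ Set.Ioi (0:ℝ) :=
        eventually_mem_nhdsWithin
      obtain ⟨t, ht1, ht2⟩ := (hev.and hev2).exists
      exact absurd (hpos t ht2) (not_lt.mpr ht1.le)
  intro v hvw hv0
  have hvmem : v ∈ Zs := by simp [hZs, Finset.mem_filter, hvw, hv0]
  exact (Finset.sum_eq_zero_iff_of_nonneg (fun v _ => hτ0 Fh v)).mp (hSsum ▸ hSle) v hvmem

/-- If each `η^{c,u}` is the unique stationary distribution of `φ^{c,u}` and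
every class uses an excess payoff or pairwise comparison revision protocol, then every rest
point of the mean dynamic is a MSNE. -/
theorem stmt13 [Fintype C] [Nonempty C]
    [∀ c, Fintype (S c)] [∀ c, Nonempty (S c)]
    [∀ c, Fintype (U c)] [∀ c, Nonempty (U c)]
    (m lam : C → ℝ) (hm : ∀ c, 0 < m c) (hlam : ∀ c, 0 < lam c)
    (φ : (c : C) → U c → Matrix (S c) (S c) ℝ)
    (hφ0 : ∀ c (u : U c) s s', 0 ≤ φ c u s s')
    (hφ1 : ∀ c (u : U c) s', ∑ s, φ c u s s' = 1)
    (η : (c : C) → U c → S c → ℝ)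
    (hη0 : ∀ c (u : U c) s, 0 ≤ η c u s)
    (hη1 : ∀ c (u : U c), ∑ s, η c u s = 1)
    (hηst : ∀ c (u : U c) s, ∑ s', φ c u s s' * η c u s' = η c u s)
    (hηuniq : ∀ c (u : U c) (η' : S c → ℝ),
        (∀ s, 0 ≤ η' s) → (∑ s, η' s) = 1 →
        (∀ s, ∑ s', φ c u s s' * η' s' = η' s) → η' = η c u)
    (F : (c : C) → ((c' : C) → S c' → U c' → ℝ) → U c → ℝ)
    (ρ : (c : C) → (U c → ℝ) → (U c → ℝ) → U c → U c → ℝ)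
    (hρ0 : ∀ c F' σ, σ ∈ simplexSet (m c) → ∀ u v, 0 ≤ ρ c F' σ u v)
    (hρ : ∀ c, IsExcessPayoff (m c) (ρ c) ∨ IsPairwiseComparison (m c) (ρ c))
    (μ : (c : C) → S c → U c → ℝ) (hμX : MemX m μ)
    (hrest : ∀ c (s : S c) (u : U c), fdFlow lam φ μ c s u + frFlow F ρ μ c s u = 0) :
    IsMSNE F η μ := by

  classical
  intro c
  obtain ⟨hμ0, hμm⟩ := hμX c
  have hmc := hm c
  set σ : U c → ℝ := fun v => ∑ s, μ c s v with hσdef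
  have hσ0 : ∀ v, 0 ≤ σ v := fun v => Finset.sum_nonneg fun s _ => hμ0 s v
  have hσm : ∑ v, σ v = m c := by rw [← hμm]; exact Finset.sum_comm
  have hσmem : σ ∈ simplexSet (m c) := ⟨hσ0, hσm⟩
  set Fc : U c → ℝ := F c μ with hFcdef
  have hfr : ∀ s u, frFlow F ρ μ c s u =
      (∑ u', μ c s u' * ρ c Fc σ u' u) - μ c s u * ∑ u', ρ c Fc σ u u' := fun s u => rfl
  have hcol : ∀ u, ∑ s, ∑ s', φ c u s s' * μ c s' u = σ u := by
    intro u
    rw [Finset.sum_comm]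
    calc ∑ s', ∑ s, φ c u s s' * μ c s' u = ∑ s', (∑ s, φ c u s s') * μ c s' u := by
          refine Finset.sum_congr rfl fun s' _ => ?_; rw [Finset.sum_mul]
      _ = ∑ s', μ c s' u := by
          refine Finset.sum_congr rfl fun s' _ => ?_; rw [hφ1 c u s', one_mul]
      _ = σ u := rfl
  have hfdsum : ∀ u, ∑ s, fdFlow lam φ μ c s u = 0 := by
    intro u
    calc ∑ s, fdFlow lam φ μ c s u
        = lam c * ((∑ s, ∑ s', φ c u s s' * μ c s' u) - ∑ s, μ c s u) := by
          unfold fdFlow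
          rw [← Finset.mul_sum, Finset.sum_sub_distrib]
      _ = 0 := by rw [hcol u]; show lam c * (σ u - σ u) = 0; ring
  have hfrsum : ∀ u, ∑ s, frFlow F ρ μ c s u = 0 := by
    intro u
    have h1 : ∑ s, (fdFlow lam φ μ c s u + frFlow F ρ μ c s u) = 0 :=
      Finset.sum_eq_zero fun s _ => hrest c s u
    rw [Finset.sum_add_distrib, hfdsum u] at h1
    linarith
  have hpolicy : ∀ u, ∑ u', σ u' * ρ c Fc σ u' u = σ u * ∑ u', ρ c Fc σ u u' := by
    intro u
    have h := hfrsum u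
    simp only [hfr] at h
    rw [Finset.sum_sub_distrib] at h
    have h2 : ∑ s, ∑ u', μ c s u' * ρ c Fc σ u' u = ∑ u', σ u' * ρ c Fc σ u' u := by
      rw [Finset.sum_comm]
      exact Finset.sum_congr rfl fun u' _ => (Finset.sum_mul ..).symm
    have h3 : ∑ s, μ c s u * ∑ u', ρ c Fc σ u u' = σ u * ∑ u', ρ c Fc σ u u' :=
      (Finset.sum_mul ..).symm
    rw [h2, h3] at h
    linarith
  have key : (∀ u, 0 < σ u → ∀ v, Fc v ≤ Fc u) ∧ (∀ s u, frFlow F ρ μ c s u = 0) := by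
    rcases hρ c with ⟨τ, ⟨K, hK⟩, hτ0, hac, hform⟩ | ⟨τ, ⟨K, hK⟩, hτ0, hsign, hform⟩
    · -- excess payoff
      set Fh : U c → ℝ := fun w => Fc w - (∑ w', Fc w' * σ w') / m c with hFhdef
      have hρval : ∀ u v, ρ c Fc σ u v = τ Fh v := fun u v => hform Fc σ hσmem u v
      set T : ℝ := ∑ v, τ Fh v with hTdef
      have hbal : ∀ u, m c * τ Fh u = σ u * T := by
        intro u
        have h := hpolicy u
        simp only [hρval] at h
        rw [← Finset.sum_mul, hσm] at h
        exact h
      have hτval : ∀ v, τ Fh v = σ v * T / m c := by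
        intro v
        rw [eq_div_iff (ne_of_gt hmc)]
        linarith [hbal v]
      have hσFhsum : ∑ w, σ w * Fh w = 0 := by
        have e1 : ∑ w, σ w * Fh w
            = (∑ w, σ w * Fc w) - (∑ w, σ w) * ((∑ w', Fc w' * σ w') / m c) := by
          rw [Finset.sum_mul, ← Finset.sum_sub_distrib]
          refine Finset.sum_congr rfl fun w _ => ?_
          show σ w * (Fc w - (∑ w', Fc w' * σ w') / m c) = _
          ring
        rw [e1, hσm]
        have e2 : m c * ((∑ w', Fc w' * σ w') / m c) = ∑ w', Fc w' * σ w' := by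
          field_simp
        rw [e2, sub_eq_zero]
        exact Finset.sum_congr rfl fun w _ => mul_comm (σ w) (Fc w)
      have hFh_nonpos : ∀ v, Fh v ≤ 0 := by
        by_contra hcon
        push_neg at hcon
        obtain ⟨v, hv⟩ := hcon
        have h1 : 0 < ∑ v, τ Fh v * Fh v := hac Fh ⟨v, hv⟩
        have h2 : ∑ v, τ Fh v * Fh v = (T / m c) * ∑ v, σ v * Fh v := by
          rw [Finset.mul_sum]
          refine Finset.sum_congr rfl fun v _ => ?_
          rw [hτval v]; ring
        rw [h2, hσFhsum, mul_zero] at h1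
        exact lt_irrefl 0 h1
      have hσFh_each : ∀ v, σ v * Fh v = 0 := fun v =>
        (Finset.sum_eq_zero_iff_of_nonpos (fun w _ =>
          mul_nonpos_of_nonneg_of_nonpos (hσ0 w) (hFh_nonpos w))).mp hσFhsum v (Finset.mem_univ v)
      have hNash : ∀ u, 0 < σ u → ∀ v, Fc v ≤ Fc u := by
        intro u hu v
        have hFhu : Fh u = 0 := by
          rcases mul_eq_zero.mp (hσFh_each u) with h | h
          · exact absurd h (ne_of_gt hu)
          · exact h
        have e1 : Fc u - (∑ w', Fc w' * σ w') / m c = 0 := hFhu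
        have e2 : Fc v - (∑ w', Fc w' * σ w') / m c ≤ 0 := hFh_nonpos v
        linarith
      refine ⟨hNash, ?_⟩
      have hT0 : 0 ≤ T := Finset.sum_nonneg fun v _ => hτ0 Fh v
      have hfrT : ∀ s u, frFlow F ρ μ c s u = (∑ u', μ c s u') * τ Fh u - μ c s u * T := by
        intro s u
        rw [hfr s u]
        simp only [hρval]
        rw [← Finset.sum_mul]
      intro s u
      rcases hT0.eq_or_lt with hTz | hTpos
      · have hτz : ∀ v, τ Fh v = 0 := fun v =>
          (Finset.sum_eq_zero_iff_of_nonneg (fun v _ => hτ0 Fh v)).mp hTz.symm v (Finset.mem_univ v)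
        rw [hfrT s u, hτz u, ← hTz]; ring
      · obtain ⟨w, hw⟩ : ∃ w, 0 < σ w := by
          by_contra hc; push_neg at hc
          have h1 : ∑ v, σ v ≤ 0 := Finset.sum_nonpos fun v _ => hc v
          rw [hσm] at h1; linarith
        have hFhw : Fh w = 0 := by
          rcases mul_eq_zero.mp (hσFh_each w) with h | h
          · exact absurd h (ne_of_gt hw)
          · exact h
        have hzero := acute_aux τ hK.continuous hτ0 hac Fh hFh_nonpos w hFhw
        have hσzero : ∀ v, v ≠ w → σ v = 0 := by
          intro v hvw
          rcases eq_or_ne (Fh v) 0 with h0 | h0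
          · have h1 := hzero v hvw h0
            rw [hτval v] at h1
            rcases div_eq_zero_iff.mp h1 with h2 | h2
            · rcases mul_eq_zero.mp h2 with h | h
              · exact h
              · exact absurd h (ne_of_gt hTpos)
            · exact absurd h2 (ne_of_gt hmc)
          · rcases mul_eq_zero.mp (hσFh_each v) with h | h
            · exact h
            · exact absurd h h0
        have hμzero : ∀ v, v ≠ w → ∀ s', μ c s' v = 0 := by
          intro v hvw s'
          exact (Finset.sum_eq_zero_iff_of_nonneg (fun s'' _ => hμ0 s'' v)).mp
            (hσzero v hvw) s' (Finset.mem_univ s')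
        have hσw : σ w = m c := by
          rw [← hσm]
          exact (Finset.sum_eq_single w (fun v _ hv => hσzero v hv)
            (fun h => absurd (Finset.mem_univ w) h)).symm
        have hMs : ∑ u', μ c s u' = μ c s w :=
          Finset.sum_eq_single w (fun v _ hv => hμzero v hv s)
            (fun h => absurd (Finset.mem_univ w) h)
        rcases eq_or_ne u w with rfl | huw
        · rw [hfrT, hMs, hτval u, hσw]
          field_simp
          ring
        · rw [hfrT, hτval u, hσzero u huw, hμzero u huw s]
          ring
    · -- pairwise comparison
      have hρval : ∀ u v, ρ c Fc σ u v = τ Fc u v := fun u v => hform Fc σ hσmem u v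
      obtain ⟨w0, -, hw0⟩ := Finset.exists_max_image (Finset.univ : Finset (U c)) Fc
        ⟨Classical.arbitrary (U c), Finset.mem_univ _⟩
      have hmax : ∀ v, Fc v ≤ Fc w0 := fun v => hw0 v (Finset.mem_univ v)
      have hτle : ∀ u v, Fc v ≤ Fc u → τ Fc u v = 0 := fun u v h =>
        sign_zero_of (hτ0 Fc u v) (by linarith) (hsign Fc u v)
      have hτlt : ∀ u v, Fc u < Fc v → 0 < τ Fc u v := fun u v h =>
        sign_pos_of (by linarith : (0:ℝ) < Fc v - Fc u) (hsign Fc u v)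
      have hsupp : ∀ v, Fc v < Fc w0 → σ v = 0 := by
        intro v hv
        have h := hpolicy w0
        simp only [hρval] at h
        have hRHS : ∑ u', τ Fc w0 u' = 0 :=
          Finset.sum_eq_zero fun u' _ => hτle w0 u' (hmax u')
        rw [hRHS, mul_zero] at h
        have heach := (Finset.sum_eq_zero_iff_of_nonneg
          (fun u' _ => mul_nonneg (hσ0 u') (hτ0 Fc u' w0))).mp h v (Finset.mem_univ v)
        rcases mul_eq_zero.mp heach with h1 | h1
        · exact h1
        · exact absurd h1 (ne_of_gt (hτlt v w0 hv))
      have hμzero : ∀ v, Fc v < Fc w0 → ∀ s', μ c s' v = 0 := by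
        intro v hv s'
        exact (Finset.sum_eq_zero_iff_of_nonneg (fun s'' _ => hμ0 s'' v)).mp
          (hsupp v hv) s' (Finset.mem_univ s')
      refine ⟨?_, ?_⟩
      · intro u hu v
        have h1 : ¬ Fc u < Fc w0 := fun h => absurd (hsupp u h) (ne_of_gt hu)
        push_neg at h1
        exact le_trans (hmax v) h1
      · intro s u
        rw [hfr s u]
        simp only [hρval]
        have h1 : ∀ u', μ c s u' * τ Fc u' u = 0 := by
          intro u'
          rcases le_or_gt (Fc u) (Fc u') with h | h
          · rw [hτle u' u h, mul_zero]
          · rw [hμzero u' (lt_of_lt_of_le h (hmax u)) s, zero_mul]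
        have h2 : ∀ u', μ c s u * τ Fc u u' = 0 := by
          intro u'
          rcases le_or_gt (Fc u') (Fc u) with h | h
          · rw [hτle u u' h, mul_zero]
          · rw [hμzero u (lt_of_lt_of_le h (hmax u')) s, zero_mul]
        rw [Finset.sum_eq_zero (fun u' _ => h1 u'), Finset.mul_sum,
          Finset.sum_eq_zero (fun u' _ => h2 u')]
        ring
  obtain ⟨hNash, hfr0⟩ := key
  intro u
  have hfd0 : ∀ s, fdFlow lam φ μ c s u = 0 := by
    intro s; have h := hrest c s u; rw [hfr0 s u] at h; linarith
  have hstat : ∀ s, ∑ s', φ c u s s' * μ c s' u = μ c s u := by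
    intro s
    have h := hfd0 s
    unfold fdFlow at h
    rcases mul_eq_zero.mp h with h1 | h1
    · exact absurd h1 (ne_of_gt (hlam c))
    · linarith
  constructor
  · exact fun hpos v => hNash u hpos v
  · intro s
    rcases (hσ0 u).eq_or_lt with hz | hp
    · have hμz : μ c s u = 0 := (Finset.sum_eq_zero_iff_of_nonneg
        (fun s'' _ => hμ0 s'' u)).mp hz.symm s (Finset.mem_univ s)
      have hz' : ∑ s', μ c s' u = 0 := hz.symm
      rw [hμz, hz', mul_zero]
    · have hηu := hηuniq c u (fun s' => μ c s' u / σ u)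
        (fun s' => div_nonneg (hμ0 s' u) (hσ0 u))
        (by rw [← Finset.sum_div]; exact div_self (ne_of_gt hp))
        (by
          intro s'
          have e1 : ∑ s'', φ c u s' s'' * (μ c s'' u / σ u)
              = (∑ s'', φ c u s' s'' * μ c s'' u) / σ u := by
            rw [Finset.sum_div]
            exact Finset.sum_congr rfl fun s'' _ => (mul_div_assoc _ _ _).symm
          rw [e1, hstat s'])
      have he := congrFun hηu s
      show μ c s u = η c u s * σ u
      rw [← he]
      exact (div_mul_cancel₀ _ (ne_of_gt hp)).symm
end

section
/- Let c ∈ C and suppose the revision protocol ρ^c is imitative, excess payoff, or pairwise comparison. Let μ ∈ X be such that for every u ∈ U^c, μ^c[S^c,u] > 0 implies F^c_u(μ) ≥ F^c_v(μ) for all v ∈ U^c. Then Σ_{s∈S^c} f^{c,r}_{s,u}(μ) = 0 for every u ∈ U^c. -/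
open Finset

variable {C : Type*} {S U : C → Type*}

lemma aux_tau_zero {V : Type*} [Fintype V] [DecidableEq V]
    (τ : (V → ℝ) → V → ℝ) (K : NNReal) (hL : LipschitzWith K τ)
    (hτ0 : ∀ F v, 0 ≤ τ F v)
    (hac : ∀ Fhat : V → ℝ, (∃ v, 0 < Fhat v) → 0 < ∑ v, τ Fhat v * Fhat v)
    (Fh : V → ℝ) (hle : ∀ v, Fh v ≤ 0) (z w : V) (hz : Fh z = 0) (hwz : w ≠ z) :
    τ Fh w = 0 := by
  have hK : (0:ℝ) ≤ K := K.coe_nonneg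
  have key : ∀ ε : ℝ, 0 < ε → ε ≤ 1 → τ Fh w ≤ (τ Fh z + 2 * K) * ε := by
    intro ε hε hε1
    set G : V → ℝ := fun v =>
      Fh v + ε^2 * (if v = z then 1 else 0) - ε * (if v = w then 1 else 0) with hG
    have hGz : G z = ε ^ 2 := by
      simp [hG, hz, (Ne.symm hwz)]
    have hGw : G w = Fh w - ε := by
      simp [hG, hwz]
    have hGv : ∀ v, v ≠ z → v ≠ w → G v = Fh v := by
      intro v h1 h2; simp [hG, h1, h2]
    have hdist : dist G Fh ≤ ε := by
      rw [dist_pi_le_iff hε.le]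
      intro v
      rw [Real.dist_eq]
      rcases eq_or_ne v z with rfl | h1
      · rw [hGz, hz, sub_zero, abs_of_nonneg (sq_nonneg ε)]
        nlinarith
      rcases eq_or_ne v w with rfl | h2
      · rw [hGw]; simp [abs_of_nonpos, hε.le]
      · rw [hGv v h1 h2]; simp [hε.le]
    have hd : dist (τ G) (τ Fh) ≤ K * ε := by
      calc dist (τ G) (τ Fh) ≤ K * dist G Fh := hL.dist_le_mul G Fh
        _ ≤ K * ε := by nlinarith
    have hcw : |τ G w - τ Fh w| ≤ K * ε := by
      calc |τ G w - τ Fh w| = dist (τ G w) (τ Fh w) := (Real.dist_eq _ _).symm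
        _ ≤ dist (τ G) (τ Fh) := dist_le_pi_dist _ _ _
        _ ≤ K * ε := hd
    have hcz : |τ G z - τ Fh z| ≤ K * ε := by
      calc |τ G z - τ Fh z| = dist (τ G z) (τ Fh z) := (Real.dist_eq _ _).symm
        _ ≤ dist (τ G) (τ Fh) := dist_le_pi_dist _ _ _
        _ ≤ K * ε := hd
    have hpos : 0 < ∑ v, τ G v * G v := hac G ⟨z, by rw [hGz]; positivity⟩
    have hzmem : z ∈ (Finset.univ : Finset V) := Finset.mem_univ z
    have hwmem : w ∈ (Finset.univ.erase z) := Finset.mem_erase.mpr ⟨hwz, Finset.mem_univ w⟩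
    have hsplit : ∑ v, τ G v * G v
        = τ G z * G z + (τ G w * G w + ∑ v ∈ (Finset.univ.erase z).erase w, τ G v * G v) := by
      have e1 := (Finset.add_sum_erase _ (fun v => τ G v * G v) hzmem).symm
      have e2 := (Finset.add_sum_erase _ (fun v => τ G v * G v) hwmem).symm
      rw [e1, e2]
    have hrest : ∑ v ∈ (Finset.univ.erase z).erase w, τ G v * G v ≤ 0 := by
      apply Finset.sum_nonpos
      intro v hv
      have h2 : v ≠ w := (Finset.mem_erase.mp hv).1
      have h1 : v ≠ z := (Finset.mem_erase.mp (Finset.mem_erase.mp hv).2).1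
      rw [hGv v h1 h2]
      exact mul_nonpos_of_nonneg_of_nonpos (hτ0 _ _) (hle v)
    have hGwle : τ G w * G w ≤ -(ε * τ G w) := by
      rw [hGw]
      have := hτ0 G w
      nlinarith [hle w]
    have hstep : ε * τ G w < ε^2 * τ G z := by
      rw [hsplit] at hpos
      rw [hGz] at hpos
      nlinarith
    have htw : τ G w < ε * τ G z := by
      have := (mul_lt_mul_iff_right₀ hε).mp (by nlinarith : ε * τ G w < ε * (ε * τ G z))
      exact this
    have h1 : τ Fh w ≤ τ G w + K * ε := by
      have := abs_le.mp hcw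
      linarith [this.1]
    have h2 : τ G z ≤ τ Fh z + K * ε := by
      have := abs_le.mp hcz
      linarith [(abs_le.mp hcz).2]
    have hτz : 0 ≤ τ Fh z := hτ0 _ _
    have h3 : ε * τ G z ≤ ε * (τ Fh z + K * ε) := mul_le_mul_of_nonneg_left h2 hε.le
    have h4 : (K:ℝ) * ε * ε ≤ K * ε := mul_le_of_le_one_right (mul_nonneg hK hε.le) hε1
    nlinarith
  have h0 : 0 ≤ τ Fh w := hτ0 _ _
  by_contra hne
  have hpos : 0 < τ Fh w := lt_of_le_of_ne h0 (Ne.symm hne)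
  set Cst : ℝ := τ Fh z + 2 * K with hC
  have hC0 : 0 ≤ Cst := by have := hτ0 Fh z; positivity
  set ε : ℝ := min 1 (τ Fh w / (2 * (Cst + 1))) with hε
  have hεpos : 0 < ε := lt_min one_pos (by positivity)
  have hε1 : ε ≤ 1 := min_le_left _ _
  have hεle : ε ≤ τ Fh w / (2 * (Cst + 1)) := min_le_right _ _
  have := key ε hεpos hε1
  have : τ Fh w ≤ Cst * (τ Fh w / (2 * (Cst + 1))) := by
    calc τ Fh w ≤ Cst * ε := this
      _ ≤ Cst * (τ Fh w / (2 * (Cst + 1))) := by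
        apply mul_le_mul_of_nonneg_left hεle hC0
  have hlt : Cst * (τ Fh w / (2 * (Cst + 1))) < τ Fh w := by
    rw [mul_div_assoc', div_lt_iff₀ (by positivity)]
    nlinarith
  linarith

/-- Fix a class `c` whose revision protocol is imitative, excess payoff, or
pairwise comparison. If at `μ ∈ X` every policy of class `c` with positive mass is payoff
maximizing, then the aggregate revision flow of every policy of class `c` vanishes. -/
theorem stmt14 [Fintype C] [Nonempty C]
    [∀ c, Fintype (S c)] [∀ c, Nonempty (S c)]
    [∀ c, Fintype (U c)] [∀ c, Nonempty (U c)]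
    (m : C → ℝ) (hm : ∀ c, 0 < m c)
    (F : (c : C) → ((c' : C) → S c' → U c' → ℝ) → U c → ℝ)
    (ρ : (c : C) → (U c → ℝ) → (U c → ℝ) → U c → U c → ℝ)
    (hρ0 : ∀ c F' σ, σ ∈ simplexSet (m c) → ∀ u v, 0 ≤ ρ c F' σ u v)
    (c : C)
    (hρc : IsImitative (m c) (ρ c) ∨ IsExcessPayoff (m c) (ρ c) ∨
        IsPairwiseComparison (m c) (ρ c))
    (μ : (c : C) → S c → U c → ℝ) (hμX : MemX m μ)
    (hopt : ∀ u : U c, (0 < ∑ s, μ c s u) → ∀ v, F c μ v ≤ F c μ u) :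
    ∀ u : U c, ∑ s, frFlow F ρ μ c s u = 0 := by
  intro u
  classical
  obtain ⟨hμ0, hμm⟩ := hμX c
  set σ : U c → ℝ := fun v => ∑ s, μ c s v with hσdef
  have hσ0 : ∀ v, 0 ≤ σ v := fun v => Finset.sum_nonneg fun s _ => hμ0 s v
  have hσm : ∑ v, σ v = m c := by rw [← hμm]; exact Finset.sum_comm
  have hσmem : σ ∈ simplexSet (m c) := ⟨hσ0, hσm⟩
  have hmc : 0 < m c := hm c
  have hsum : ∑ s, frFlow F ρ μ c s u
      = (∑ v, σ v * ρ c (F c μ) σ v u) - σ u * ∑ v, ρ c (F c μ) σ u v := by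
    simp only [frFlow, ← hσdef]
    rw [Finset.sum_sub_distrib, Finset.sum_comm, ← Finset.sum_mul]
    congr 1
    exact Finset.sum_congr rfl fun v _ => by rw [← Finset.sum_mul]
  rw [hsum]
  rcases hρc with ⟨r, _, hr0, hmono, hdef⟩ | hρc2
  · -- imitative case
    have hterm : ∀ v, σ v * ρ c (F c μ) σ v u = σ u * ρ c (F c μ) σ u v := by
      intro v
      rw [hdef _ _ hσmem, hdef _ _ hσmem]
      rcases eq_or_lt_of_le (hσ0 u) with hu | hu
      · rcases eq_or_lt_of_le (hσ0 v) with hv | hv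
        · rw [← hu, ← hv]; ring
        · rw [← hu]; ring
      rcases eq_or_lt_of_le (hσ0 v) with hv | hv
      · rw [← hv]; ring
      · have huv : F c μ u ≤ F c μ v := hopt v hv u
        have hvu : F c μ v ≤ F c μ u := hopt u hu v
        have h1 := (hmono (F c μ) σ hσmem u v u).mp huv
        have h2 := (hmono (F c μ) σ hσmem v u v).mp hvu
        have : r (F c μ) σ v u = r (F c μ) σ u v := by linarith
        rw [this]; ring
    rw [Finset.sum_congr rfl fun v _ => hterm v, ← Finset.mul_sum]
    ring
  rcases hρc2 with ⟨τ, ⟨K, hL⟩, hτ0, hac, hdef⟩ | ⟨τ, _, hτ0, hsign, hdef⟩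
  · -- excess payoff case
    set Fh : U c → ℝ := fun w => F c μ w - (∑ w', F c μ w' * σ w') / m c with hFh
    have hρeq : ∀ u' v, ρ c (F c μ) σ u' v = τ Fh v := fun u' v => hdef _ _ hσmem u' v
    -- exists u0 with positive mass
    obtain ⟨u0, hu0⟩ : ∃ u0, 0 < σ u0 := by
      by_contra h
      push_neg at h
      have : ∑ v, σ v = 0 := le_antisymm (Finset.sum_nonpos fun v _ => h v)
        (Finset.sum_nonneg fun v _ => hσ0 v)
      rw [hσm] at this; linarith
    have hmax : ∀ v, F c μ v ≤ F c μ u0 := hopt u0 hu0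
    have havg : ∑ w', F c μ w' * σ w' = F c μ u0 * m c := by
      rw [← hσm, Finset.mul_sum]
      refine Finset.sum_congr rfl fun w _ => ?_
      rcases eq_or_lt_of_le (hσ0 w) with hw | hw
      · rw [← hw]; ring
      · have := hopt w hw u0
        have h2 := hmax w
        have : F c μ w = F c μ u0 := le_antisymm h2 this
        rw [this]
    have hFh0 : ∀ w, 0 < σ w → Fh w = 0 := by
      intro w hw
      have h1 : F c μ w = F c μ u0 := le_antisymm (hmax w) (hopt w hw u0)
      simp only [hFh, havg, h1]
      field_simp
      ring
    have hFhle : ∀ w, Fh w ≤ 0 := by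
      intro w
      simp only [hFh, havg]
      rw [mul_div_assoc, div_self hmc.ne', mul_one]
      linarith [hmax w]
    have hzero : ∀ z w2 : U c, Fh z = 0 → w2 ≠ z → τ Fh w2 = 0 :=
      fun z w2 hz hw2 => aux_tau_zero τ K hL hτ0 hac Fh hFhle z w2 hz hw2
    have hσsum : ∑ v, σ v * τ Fh u = (m c) * τ Fh u := by
      rw [← Finset.sum_mul, hσm]
    simp only [hρeq]
    rw [hσsum]
    -- case analysis on σ u
    rcases eq_or_lt_of_le (hσ0 u) with hu | hu
    · -- σ u = 0 ; u ≠ u0 so τ Fh u = 0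
      have huu0 : u ≠ u0 := by rintro rfl; rw [← hu] at hu0; exact lt_irrefl _ hu0
      rw [hzero u0 u (hFh0 u0 hu0) huu0, ← hu]
      ring
    · -- σ u > 0
      have hFhu : Fh u = 0 := hFh0 u hu
      by_cases hex : ∃ v, v ≠ u ∧ 0 < σ v
      · obtain ⟨v, hvu, hv⟩ := hex
        have hτu : τ Fh u = 0 := hzero v u (hFh0 v hv) (Ne.symm hvu)
        have hT : ∑ v', τ Fh v' = 0 := by
          apply Finset.sum_eq_zero
          intro v' _
          rcases eq_or_ne v' u with rfl | hne
          · exact hτu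
          · exact hzero u v' hFhu hne
        rw [hτu, hT]; ring
      · -- σ is concentrated on u : σ u = m c
        push_neg at hex
        have hσu : σ u = m c := by
          rw [← hσm]
          symm
          apply Finset.sum_eq_single u
          · intro v _ hv
            exact le_antisymm (hex v hv) (hσ0 v)
          · intro h; exact absurd (Finset.mem_univ u) h
        have hT : ∑ v', τ Fh v' = τ Fh u := by
          apply Finset.sum_eq_single u
          · intro v' _ hne
            exact hzero u v' hFhu hne
          · intro h; exact absurd (Finset.mem_univ u) h
        rw [hT, hσu]; ring
  · -- pairwise comparison case
    have hρeq : ∀ u' v, ρ c (F c μ) σ u' v = τ (F c μ) u' v := fun u' v => hdef _ _ hσmem u' v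
    have hτzero : ∀ a b : U c, F c μ b ≤ F c μ a → τ (F c μ) a b = 0 := by
      intro a b hab
      have hmax0 : max 0 (F c μ b - F c μ a) = 0 := max_eq_left (by linarith)
      have := hsign (F c μ) a b
      rw [hmax0, Real.sign_zero] at this
      rcases lt_trichotomy (τ (F c μ) a b) 0 with h | h | h
      · linarith [hτ0 (F c μ) a b]
      · exact h
      · rw [Real.sign_of_pos h] at this; norm_num at this
    have h1 : ∑ v, σ v * ρ c (F c μ) σ v u = 0 := by
      apply Finset.sum_eq_zero
      intro v _
      rw [hρeq]
      rcases eq_or_lt_of_le (hσ0 v) with hv | hv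
      · rw [← hv]; ring
      · rw [hτzero v u (hopt v hv u)]; ring
    have h2 : ∑ v, ρ c (F c μ) σ u v = 0 ∨ σ u = 0 := by
      rcases eq_or_lt_of_le (hσ0 u) with hu | hu
      · right; exact hu.symm
      · left
        apply Finset.sum_eq_zero
        intro v _
        rw [hρeq]
        exact hτzero u v (hopt u hu v)
    rw [h1]
    rcases h2 with h | h
    · rw [h]; ring
    · rw [h]; ring
end

section
/- Let c ∈ C and suppose the revision protocol ρ^c is excess payoff or pairwise comparison. Let μ ∈ X be such that Σ_{s∈S^c} f^{c,r}_{s,u}(μ) = 0 for every u ∈ U^c. Then for every u ∈ U^c with μ^c[S^c,u] > 0, one has F^c_u(μ) ≥ F^c_v(μ) for all v ∈ U^c. -/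
/-!
Summing the revision flow over states shows that at a rest point the policy masses `σ` balance
inflow and outflow of every policy. For an excess payoff protocol the switching rates do not depend
on the current policy, so balance forces the rates `τ(F̂)` to be proportional to `σ`; hence
`∑ τ(F̂) F̂` is a multiple of `∑ σ F̂ = 0`, acuteness rules out a positive excess payoff, and every
policy in the support has zero excess payoff. For a pairwise comparison protocol, a worst policy
`a` of the support receives no inflow, so by balance it has no outflow either, and thus no policy
can pay more than `a`.
-/

open Finset

variable {C : Type*} {S U : C → Type*}

section Balance

variable {V : Type*} [Fintype V]

def IsBalanced (σ : V → ℝ) (R : V → V → ℝ) : Prop :=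
  ∀ w, ∑ w', σ w' * R w' w = σ w * ∑ w', R w w'

theorem IsBalanced.mul_sum_eq {σ t : V → ℝ} (h : IsBalanced σ fun _ w => t w) (w : V) :
    t w * ∑ w', σ w' = σ w * ∑ w', t w' := by
  rw [mul_comm, sum_mul, h w]

theorem eq_zero_of_sum_mul_eq_zero {σ G : V → ℝ} (hσ : ∀ w, 0 ≤ σ w) (hG : ∀ w, G w ≤ 0)
    (hsum : ∑ w, σ w * G w = 0) {u : V} (hu : 0 < σ u) : G u = 0 := by
  have hprod := (sum_eq_zero_iff_of_nonpos fun w _ =>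
    mul_nonpos_of_nonneg_of_nonpos (hσ w) (hG w)).mp hsum u (mem_univ u)
  exact (mul_eq_zero.mp hprod).resolve_left hu.ne'

theorem IsBalanced.le_of_acute {σ t G : V → ℝ} (hbal : IsBalanced σ fun _ w => t w)
    (hσ : ∀ w, 0 ≤ σ w) (hmass : 0 < ∑ w, σ w) (hcentered : ∑ w, σ w * G w = 0)
    (hacute : (∃ v, 0 < G v) → 0 < ∑ w, t w * G w) {u : V} (hu : 0 < σ u) (v : V) :
    G v ≤ G u := by
  have ht : ∀ w, t w = (∑ w', t w') / (∑ w', σ w') * σ w := fun w => by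
    rw [div_mul_eq_mul_div, eq_div_iff hmass.ne', mul_comm _ (σ w), hbal.mul_sum_eq]
  have htG : ∑ w, t w * G w = 0 := by
    rw [sum_congr rfl fun w _ => by rw [ht w, mul_assoc], ← mul_sum, hcentered, mul_zero]
  have hG : ∀ w, G w ≤ 0 := fun w => by
    by_contra! hw
    exact (hacute ⟨w, hw⟩).ne' htG
  rw [eq_zero_of_sum_mul_eq_zero hσ hG hcentered hu]
  exact hG v

theorem IsBalanced.le_of_rate_eq_zero_iff {σ G : V → ℝ} {R : V → V → ℝ} (hbal : IsBalanced σ R)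
    (hσ : ∀ w, 0 ≤ σ w) (hR : ∀ u v, 0 ≤ R u v) (hRG : ∀ u v, R u v = 0 ↔ G v ≤ G u)
    {u : V} (hu : 0 < σ u) (v : V) : G v ≤ G u := by
  classical
  by_contra! hvu
  obtain ⟨a, ha, hmin⟩ := exists_min_image {w | 0 < σ w} G ⟨u, by simpa using hu⟩
  have hσa : 0 < σ a := by simpa using ha
  have hinflow : ∑ w, σ w * R w a = 0 := sum_eq_zero fun w _ => by
    rcases (hσ w).eq_or_lt with hw | hw
    · rw [← hw, zero_mul]
    · rw [(hRG w a).mpr (hmin w (by simpa using hw)), mul_zero]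
  have houtflow : ∑ w, R a w = 0 := by
    rw [hbal a] at hinflow
    exact (mul_eq_zero.mp hinflow).resolve_left hσa.ne'
  have hRav : R a v = 0 := (sum_eq_zero_iff_of_nonneg fun w _ => hR a w).mp houtflow v (mem_univ v)
  exact ((hRG a v).mp hRav).not_gt ((hmin u (by simpa using hu)).trans_lt hvu)

theorem IsExcessPayoff.le_of_isBalanced {mc : ℝ} {ρ : (V → ℝ) → (V → ℝ) → V → V → ℝ}
    (hρ : IsExcessPayoff mc ρ) (hmc : 0 < mc) {F σ : V → ℝ} (hσ : σ ∈ simplexSet mc)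
    (hbal : IsBalanced σ (ρ F σ)) {u : V} (hu : 0 < σ u) (v : V) : F v ≤ F u := by
  obtain ⟨τ, -, -, hacute, hρτ⟩ := hρ
  set Fhat : V → ℝ := fun w => F w - (∑ w', F w' * σ w') / mc
  have hcentered : ∑ w, σ w * Fhat w = 0 := by
    simp only [Fhat, mul_sub, sum_sub_distrib, ← sum_mul, hσ.2, mul_div_cancel₀ _ hmc.ne']
    exact sub_eq_zero.mpr (sum_congr rfl fun w _ => mul_comm _ _)
  have hbal' : IsBalanced σ fun _ w => τ Fhat w := by
    simpa only [IsBalanced, hρτ F σ hσ] using hbal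
  have := hbal'.le_of_acute hσ.1 (hσ.2 ▸ hmc) hcentered (hacute Fhat) hu v
  simpa [Fhat] using this

theorem IsPairwiseComparison.le_of_isBalanced {mc : ℝ} {ρ : (V → ℝ) → (V → ℝ) → V → V → ℝ}
    (hρ : IsPairwiseComparison mc ρ) {F σ : V → ℝ} (hσ : σ ∈ simplexSet mc)
    (hbal : IsBalanced σ (ρ F σ)) {u : V} (hu : 0 < σ u) (v : V) : F v ≤ F u := by
  obtain ⟨τ, -, hτ, hsign, hρτ⟩ := hρ
  refine hbal.le_of_rate_eq_zero_iff hσ.1 (fun a b => hρτ F σ hσ a b ▸ hτ F a b)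
    (fun a b => ?_) hu v
  rw [hρτ F σ hσ, ← Real.sign_eq_zero_iff, hsign, Real.sign_eq_zero_iff, max_eq_left_iff,
    sub_nonpos]

end Balance

theorem mem_simplexSet_of_memX [∀ c, Fintype (S c)] [∀ c, Fintype (U c)] {m : C → ℝ}
    {μ : (c : C) → S c → U c → ℝ} (hμ : MemX m μ) (c : C) :
    (fun u => ∑ s, μ c s u) ∈ simplexSet (m c) :=
  ⟨fun u => sum_nonneg fun s _ => (hμ c).1 s u, by rw [← (hμ c).2, sum_comm]⟩

theorem isBalanced_of_sum_frFlow_eq_zero [∀ c, Fintype (S c)] [∀ c, Fintype (U c)]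
    {F : (c : C) → ((c' : C) → S c' → U c' → ℝ) → U c → ℝ}
    {ρ : (c : C) → (U c → ℝ) → (U c → ℝ) → U c → U c → ℝ} {μ : (c : C) → S c → U c → ℝ} {c : C}
    (hzero : ∀ u : U c, ∑ s, frFlow F ρ μ c s u = 0) :
    IsBalanced (fun u => ∑ s, μ c s u) (ρ c (F c μ) fun u => ∑ s, μ c s u) := fun u => by
  have h := hzero u
  simp only [frFlow, sum_sub_distrib, ← sum_mul] at h
  rw [sum_comm] at h
  simp only [← sum_mul] at h
  exact sub_eq_zero.mp h

theorem stmt15_general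
    [∀ c, Fintype (S c)]
    [∀ c, Fintype (U c)]
    (m : C → ℝ) (hm : ∀ c, 0 < m c)
    (F : (c : C) → ((c' : C) → S c' → U c' → ℝ) → U c → ℝ)
    (ρ : (c : C) → (U c → ℝ) → (U c → ℝ) → U c → U c → ℝ)
    (c : C)
    (hρc : IsExcessPayoff (m c) (ρ c) ∨ IsPairwiseComparison (m c) (ρ c))
    (μ : (c : C) → S c → U c → ℝ) (hμX : MemX m μ)
    (hzero : ∀ u : U c, ∑ s, frFlow F ρ μ c s u = 0) :
    ∀ u : U c, (0 < ∑ s, μ c s u) → ∀ v, F c μ v ≤ F c μ u := by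
  intro u hu v
  have hσ := mem_simplexSet_of_memX hμX c
  have hbal := isBalanced_of_sum_frFlow_eq_zero hzero
  rcases hρc with hexcess | hpairwise
  · exact hexcess.le_of_isBalanced (hm c) hσ hbal hu v
  · exact hpairwise.le_of_isBalanced hσ hbal hu v

/-- Fix a class `c` whose revision protocol is excess payoff or pairwise
comparison. If at `μ ∈ X` the aggregate revision flow of every policy of class `c` vanishes,
then every policy of class `c` with positive mass is payoff maximizing. -/
theorem stmt15 [Fintype C] [Nonempty C]
    [∀ c, Fintype (S c)] [∀ c, Nonempty (S c)]
    [∀ c, Fintype (U c)] [∀ c, Nonempty (U c)]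
    (m : C → ℝ) (hm : ∀ c, 0 < m c)
    (F : (c : C) → ((c' : C) → S c' → U c' → ℝ) → U c → ℝ)
    (ρ : (c : C) → (U c → ℝ) → (U c → ℝ) → U c → U c → ℝ)
    (hρ0 : ∀ c F' σ, σ ∈ simplexSet (m c) → ∀ u v, 0 ≤ ρ c F' σ u v)
    (c : C)
    (hρc : IsExcessPayoff (m c) (ρ c) ∨ IsPairwiseComparison (m c) (ρ c))
    (μ : (c : C) → S c → U c → ℝ) (hμX : MemX m μ)
    (hzero : ∀ u : U c, ∑ s, frFlow F ρ μ c s u = 0) :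
    ∀ u : U c, (0 < ∑ s, μ c s u) → ∀ v, F c μ v ≤ F c μ u :=
  stmt15_general m hm F ρ c hρc μ hμX hzero
end

section
/- Assume that for every class c ∈ C the revision protocol ρ^c is imitative. Let μ ∈ X be a mixed stationary Nash equilibrium (MSNE) such that for every class c ∈ C there is exactly one policy u ∈ U^c attaining max_{v∈U^c} F^c_v(μ). Then μ is a rest point of the mean dynamic, i.e. f^{c,d}_{s,u}(μ) + f^{c,r}_{s,u}(μ) = 0 for every c ∈ C, s ∈ S^c, u ∈ U^c. -/
open Finset

variable {C : Type*} {S U : C → Type*}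

/-! At an MSNE the state distribution of every policy is stationary, so the dynamic flow
vanishes. A uniquely maximal policy carries all the mass, since any policy in use is a best
response; an imitative protocol never switches to an unused policy, so the only revision
traffic is from that policy to itself, which cancels. -/

theorem Matrix.sum_mul_eq_self_of_proportional_fixedPoint {ι : Type*} [Fintype ι]
    (P : Matrix ι ι ℝ) {η x : ι → ℝ} (t : ℝ) (hη : ∀ i, ∑ j, P i j * η j = η i)
    (hx : ∀ j, x j = η j * t) (i : ι) : ∑ j, P i j * x j = x i := by
  calc ∑ j, P i j * x j = (∑ j, P i j * η j) * t := by
        rw [Finset.sum_mul]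
        exact Finset.sum_congr rfl fun j _ => by rw [hx j, mul_assoc]
    _ = x i := by rw [hη, hx]

theorem sum_mul_sub_mul_sum_eq_zero_of_concentrated {V : Type*} [Fintype V]
    {x : V → ℝ} {R : V → V → ℝ} {v₀ : V} (hx : ∀ v ≠ v₀, x v = 0)
    (hR : ∀ w v, v ≠ v₀ → R w v = 0) (u : V) :
    ∑ w, x w * R w u - x u * ∑ w, R u w = 0 := by
  rw [Finset.sum_eq_single_of_mem v₀ (mem_univ _) fun w _ hw => by rw [hx w hw, zero_mul],
    Finset.sum_eq_single_of_mem v₀ (mem_univ _) fun w _ hw => hR u w hw]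
  by_cases hu : u = v₀
  · subst hu; ring
  · rw [hx u hu, hR v₀ u hu]; ring

theorem IsImitative.eq_zero_of_eq_zero {V : Type*} [Fintype V] {mc : ℝ}
    {ρ : (V → ℝ) → (V → ℝ) → V → V → ℝ} (hρ : IsImitative mc ρ) (F : V → ℝ) {σ : V → ℝ}
    (hσ : σ ∈ simplexSet mc) (u : V) {v : V} (hv : σ v = 0) : ρ F σ u v = 0 := by
  obtain ⟨r, -, -, -, hρr⟩ := hρ
  rw [hρr F σ hσ, hv, mul_zero, zero_div]

theorem MemX.policyMass_mem_simplexSet [∀ c, Fintype (S c)] [∀ c, Fintype (U c)]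
    {m : C → ℝ} {μ : (c : C) → S c → U c → ℝ} (hμ : MemX m μ) (c : C) :
    (fun v => ∑ s, μ c s v) ∈ simplexSet (m c) :=
  ⟨fun v => sum_nonneg fun s _ => (hμ c).1 s v, by rw [Finset.sum_comm, (hμ c).2]⟩

theorem IsMSNE.fdFlow_eq_zero [∀ c, Fintype (S c)]
    {F : (c : C) → ((c' : C) → S c' → U c' → ℝ) → U c → ℝ}
    {η : (c : C) → U c → S c → ℝ} {μ : (c : C) → S c → U c → ℝ} (hμ : IsMSNE F η μ)
    (lam : C → ℝ) {φ : (c : C) → U c → Matrix (S c) (S c) ℝ}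
    (hηst : ∀ c (u : U c) s, ∑ s', φ c u s s' * η c u s' = η c u s)
    (c : C) (s : S c) (u : U c) : fdFlow lam φ μ c s u = 0 := by
  rw [fdFlow, Matrix.sum_mul_eq_self_of_proportional_fixedPoint _ _ (hηst c u) (hμ c u).2,
    sub_self, mul_zero]

theorem IsMSNE.eq_zero_of_not_bestResponse [∀ c, Fintype (S c)] [∀ c, Fintype (U c)]
    {m : C → ℝ} {F : (c : C) → ((c' : C) → S c' → U c' → ℝ) → U c → ℝ}
    {η : (c : C) → U c → S c → ℝ} {μ : (c : C) → S c → U c → ℝ} (hμ : IsMSNE F η μ)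
    (hμX : MemX m μ) {c : C} {v : U c} (hv : ¬ ∀ w, F c μ w ≤ F c μ v) (s : S c) : μ c s v = 0 := by
  have hmass : ∑ s, μ c s v = 0 :=
    le_antisymm (not_lt.1 fun hpos => hv ((hμ c v).1 hpos))
      ((hμX.policyMass_mem_simplexSet c).1 v)
  exact (sum_eq_zero_iff_of_nonneg fun s _ => (hμX c).1 s v).1 hmass s (mem_univ s)

theorem stmt17_general [∀ c, Fintype (S c)] [∀ c, Fintype (U c)]
    (m lam : C → ℝ)
    (φ : (c : C) → U c → Matrix (S c) (S c) ℝ)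
    (η : (c : C) → U c → S c → ℝ)
    (hηst : ∀ c (u : U c) s, ∑ s', φ c u s s' * η c u s' = η c u s)
    (F : (c : C) → ((c' : C) → S c' → U c' → ℝ) → U c → ℝ)
    (ρ : (c : C) → (U c → ℝ) → (U c → ℝ) → U c → U c → ℝ)
    (hρ : ∀ c, IsImitative (m c) (ρ c))
    (μ : (c : C) → S c → U c → ℝ) (hμX : MemX m μ) (hMSNE : IsMSNE F η μ)
    (huniqmax : ∀ c, ∃! u : U c, ∀ v, F c μ v ≤ F c μ u) :
    ∀ c (s : S c) (u : U c), fdFlow lam φ μ c s u + frFlow F ρ μ c s u = 0 := by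
  intro c s u
  obtain ⟨u₀, -, hu₀⟩ := huniqmax c
  have hoff : ∀ v ≠ u₀, ∀ s, μ c s v = 0 := fun v hv =>
    hMSNE.eq_zero_of_not_bestResponse hμX fun hmax => hv (hu₀ v hmax)
  have hfr : frFlow F ρ μ c s u = 0 :=
    sum_mul_sub_mul_sum_eq_zero_of_concentrated (fun v hv => hoff v hv s)
      (fun w v hv => (hρ c).eq_zero_of_eq_zero _ (hμX.policyMass_mem_simplexSet c) w
        (sum_eq_zero fun s _ => hoff v hv s)) u
  rw [hMSNE.fdFlow_eq_zero lam hηst, hfr, add_zero]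

/-- If every class uses an imitative revision protocol and `μ` is a MSNE at
which, for every class, exactly one policy attains the maximal payoff, then `μ` is a rest
point of the mean dynamic. -/
theorem stmt17 [Fintype C] [Nonempty C]
    [∀ c, Fintype (S c)] [∀ c, Nonempty (S c)]
    [∀ c, Fintype (U c)] [∀ c, Nonempty (U c)]
    (m lam : C → ℝ) (hm : ∀ c, 0 < m c) (hlam : ∀ c, 0 < lam c)
    (φ : (c : C) → U c → Matrix (S c) (S c) ℝ)
    (hφ0 : ∀ c (u : U c) s s', 0 ≤ φ c u s s')
    (hφ1 : ∀ c (u : U c) s', ∑ s, φ c u s s' = 1)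
    (η : (c : C) → U c → S c → ℝ)
    (hη0 : ∀ c (u : U c) s, 0 ≤ η c u s)
    (hη1 : ∀ c (u : U c), ∑ s, η c u s = 1)
    (hηst : ∀ c (u : U c) s, ∑ s', φ c u s s' * η c u s' = η c u s)
    (F : (c : C) → ((c' : C) → S c' → U c' → ℝ) → U c → ℝ)
    (ρ : (c : C) → (U c → ℝ) → (U c → ℝ) → U c → U c → ℝ)
    (hρ0 : ∀ c F' σ, σ ∈ simplexSet (m c) → ∀ u v, 0 ≤ ρ c F' σ u v)
    (hρ : ∀ c, IsImitative (m c) (ρ c))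
    (μ : (c : C) → S c → U c → ℝ) (hμX : MemX m μ) (hMSNE : IsMSNE F η μ)
    (huniqmax : ∀ c, ∃! u : U c, ∀ v, F c μ v ≤ F c μ u) :
    ∀ c (s : S c) (u : U c), fdFlow lam φ μ c s u + frFlow F ρ μ c s u = 0 :=
  stmt17_general m lam φ η hηst F ρ hρ μ hμX hMSNE huniqmax
end
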